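/- (Example 1, minimum projection distance.) Let c₁, c₂ > 0 and let u₁, u₂ ∈ ℤ with gcd(u₁,u₂) = 1, and set û = (c₁u₁, c₂u₂) ∈ ℝ². Then the minimum of ‖P_{û^⊥}((c₁n₁, c₂n₂))‖ over all (n₁,n₂) ∈ ℤ² that are not integer multiples of (u₁,u₂) equals c₁c₂ / √(u₁²c₁² + u₂²c₂²). -/

import Mathlib

open Real
open scoped RealInnerProductSpace

/-- The vector (a, b) regarded as a point of the Euclidean plane ℝ². -/
noncomputable def vec2 (a b : ℝ) : EuclideanSpace ℝ (Fin 2) :=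
  (WithLp.equiv 2 (Fin 2 → ℝ)).symm ![a, b]

/-!
The squared distance from `x` to the line `ℝ û` is `‖x‖² - ⟪x, û⟫² / ‖û‖²`, which in the plane is
`(x₁ û₂ - x₂ û₁)² / ‖û‖²` by Lagrange's identity. For `x = (c₁n₁, c₂n₂)` the cross term is
`c₁c₂ (n₁u₂ - n₂u₁)`, an integer multiple of `c₁c₂`. Since `u₁, u₂` are coprime, this integer
vanishes exactly on the multiples of `(u₁, u₂)`, and Bézout's identity makes it equal to `1`
for some `(n₁, n₂)`.
-/

theorem norm_sub_inner_div_sq_smul_sq {E : Type*} [NormedAddCommGroup E] [InnerProductSpace ℝ E]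
    (x u : E) : ‖x - (⟪x, u⟫ / ‖u‖ ^ 2) • u‖ ^ 2 = ‖x‖ ^ 2 - ⟪x, u⟫ ^ 2 / ‖u‖ ^ 2 := by
  rcases eq_or_ne u 0 with rfl | hu
  · simp
  have hu' : ‖u‖ ≠ 0 := norm_ne_zero_iff.mpr hu
  rw [norm_sub_sq_real, real_inner_smul_right, norm_smul, mul_pow, Real.norm_eq_abs, sq_abs]
  field_simp
  ring

theorem inner_vec2 (a b p q : ℝ) : ⟪vec2 a b, vec2 p q⟫ = a * p + b * q := by
  simp only [vec2, WithLp.equiv_symm_apply, PiLp.inner_apply, RCLike.inner_apply, ringHom_apply,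
    Fin.sum_univ_two, Fin.isValue, Matrix.cons_val_zero, Matrix.cons_val_one, Matrix.cons_val_fin_one]
  ring

theorem norm_vec2 (a b : ℝ) : ‖vec2 a b‖ = √(a ^ 2 + b ^ 2) := by
  simp [vec2, EuclideanSpace.norm_eq, Fin.sum_univ_two]

theorem norm_vec2_sq (a b : ℝ) : ‖vec2 a b‖ ^ 2 = a ^ 2 + b ^ 2 := by
  rw [norm_vec2, sq_sqrt (by positivity)]

theorem norm_vec2_sub_proj (a b p q : ℝ) (hpq : vec2 p q ≠ 0) :
    ‖vec2 a b - (⟪vec2 a b, vec2 p q⟫ / ‖vec2 p q‖ ^ 2) • vec2 p q‖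
      = |a * q - b * p| / ‖vec2 p q‖ := by
  have hn : 0 < ‖vec2 p q‖ := norm_pos_iff.mpr hpq
  refine (sq_eq_sq₀ (norm_nonneg _) (by positivity)).mp ?_
  have hn2 : p ^ 2 + q ^ 2 ≠ 0 := by rw [← norm_vec2_sq]; positivity
  rw [norm_sub_inner_div_sq_smul_sq, div_pow, sq_abs, inner_vec2, norm_vec2_sq, norm_vec2_sq]
  field_simp
  ring

theorem IsCoprime.exists_eq_mul_of_mul_sub_mul_eq_zero {R : Type*} [CommRing R] {u₁ u₂ n₁ n₂ : R}
    (hu : IsCoprime u₁ u₂) (h : n₁ * u₂ - n₂ * u₁ = 0) : ∃ k, n₁ = k * u₁ ∧ n₂ = k * u₂ := by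
  obtain ⟨a, b, hab⟩ := hu
  refine ⟨a * n₁ + b * n₂, ?_, ?_⟩
  · linear_combination -n₁ * hab + b * h
  · linear_combination -n₂ * hab - a * h

theorem norm_lattice_sub_proj {c₁ c₂ : ℝ} (hc₁ : 0 < c₁) (hc₂ : 0 < c₂) {u₁ u₂ : ℤ}
    (hu : u₁ ≠ 0 ∨ u₂ ≠ 0) (n₁ n₂ : ℤ) :
    ‖vec2 (c₁ * n₁) (c₂ * n₂) -
        (⟪vec2 (c₁ * n₁) (c₂ * n₂), vec2 (c₁ * u₁) (c₂ * u₂)⟫ /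
            ‖vec2 (c₁ * u₁) (c₂ * u₂)‖ ^ 2) • vec2 (c₁ * u₁) (c₂ * u₂)‖
      = c₁ * c₂ * |((n₁ * u₂ - n₂ * u₁ : ℤ) : ℝ)| /
          √((u₁ : ℝ) ^ 2 * c₁ ^ 2 + (u₂ : ℝ) ^ 2 * c₂ ^ 2) := by
  have hne : vec2 (c₁ * u₁) (c₂ * u₂) ≠ 0 := by
    rw [← norm_ne_zero_iff, ← pow_ne_zero_iff two_ne_zero, norm_vec2_sq]
    rcases hu with hu | hu <;> have := Int.cast_ne_zero (α := ℝ).mpr hu <;> positivity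
  have hcross : c₁ * n₁ * (c₂ * u₂) - c₂ * n₂ * (c₁ * u₁)
      = c₁ * c₂ * ((n₁ * u₂ - n₂ * u₁ : ℤ) : ℝ) := by
    push_cast
    ring
  rw [norm_vec2_sub_proj _ _ _ _ hne, hcross, abs_mul, abs_of_pos (mul_pos hc₁ hc₂), norm_vec2]
  congr 2
  ring

/-- Example 1: for gcd(u₁,u₂) = 1 and û = (c₁u₁, c₂u₂), the minimum norm of the
orthogonal projection onto û^⊥ of a lattice point (c₁n₁, c₂n₂) with (n₁,n₂) not an
integer multiple of (u₁,u₂) equals c₁c₂ / √(u₁²c₁² + u₂²c₂²). -/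
theorem stmt_14 (c₁ c₂ : ℝ) (hc₁ : 0 < c₁) (hc₂ : 0 < c₂) (u₁ u₂ : ℤ)
    (hu : Int.gcd u₁ u₂ = 1) :
    IsLeast
      {r : ℝ | ∃ n₁ n₂ : ℤ, (¬∃ k : ℤ, n₁ = k * u₁ ∧ n₂ = k * u₂) ∧
        r = ‖vec2 (c₁ * n₁) (c₂ * n₂) -
          (⟪vec2 (c₁ * n₁) (c₂ * n₂), vec2 (c₁ * u₁) (c₂ * u₂)⟫ /
              ‖vec2 (c₁ * u₁) (c₂ * u₂)‖ ^ 2) • vec2 (c₁ * u₁) (c₂ * u₂)‖}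
      (c₁ * c₂ / Real.sqrt ((u₁ : ℝ) ^ 2 * c₁ ^ 2 + (u₂ : ℝ) ^ 2 * c₂ ^ 2)) := by
  have hcop : IsCoprime u₁ u₂ := Int.isCoprime_iff_gcd_eq_one.mpr hu
  simp_rw [norm_lattice_sub_proj hc₁ hc₂ hcop.ne_zero_or_ne_zero]
  constructor
  · obtain ⟨a, b, hab⟩ := hcop
    refine ⟨b, -a, ?_, ?_⟩
    · rintro ⟨k, hb, ha⟩
      exact one_ne_zero (by linear_combination -hab + u₂ * hb - u₁ * ha : (1 : ℤ) = 0)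
    · rw [show b * u₂ - -a * u₁ = 1 by linear_combination hab]
      simp
  · rintro r ⟨n₁, n₂, hn, rfl⟩
    have hd : n₁ * u₂ - n₂ * u₁ ≠ 0 := fun h => hn (hcop.exists_eq_mul_of_mul_sub_mul_eq_zero h)
    have h1 : (1 : ℝ) ≤ |((n₁ * u₂ - n₂ * u₁ : ℤ) : ℝ)| := by exact_mod_cast Int.one_le_abs hd
    exact div_le_div_of_nonneg_right (le_mul_of_one_le_right (by positivity) h1) (sqrt_nonneg _)
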